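/- arXiv:2112.05353 — 2 statements merged into one kernel-verified Lean document; each statement's English description precedes it below -/
import Mathlib

section
/- Let (V, d) be a finite metric space and let T ⊆ V be a finite set of terminals with |T| ≥ 1. The total cost of a minimum spanning tree of the complete graph on T (with edge weights given by d) is at most twice the cost of an optimal Steiner tree for T, i.e., at most twice the minimum, over all finite trees in the metric completion whose vertex set contains T, of the total edge length. -/
/-!
Double every edge of the Steiner tree and walk around it: this closed walk has length at most
twice the cost of the tree and passes through every terminal. Skipping the Steiner points only
shortens it (triangle inequality), and the consecutive pairs of the shortcut walk form a connected
graph on `T`, whose spanning forest is a spanning tree on `T` of no larger cost.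
-/

open SimpleGraph

lemma List.sum_toFinset_le_sum_map {α M : Type*} [DecidableEq α] [AddCommMonoid M]
    [PartialOrder M] [IsOrderedAddMonoid M] (l : List α) {f : α → M}
    (hf : ∀ a ∈ l, 0 ≤ f a) :
    ∑ a ∈ l.toFinset, f a ≤ (l.map f).sum := by
  rw [Finset.sum_list_map_count]
  refine Finset.sum_le_sum fun a ha => ?_
  have ha' := List.mem_toFinset.mp ha
  simpa using nsmul_le_nsmul_left (hf a ha') (List.count_pos_iff.mpr ha')

section Graph

variable {V : Type*}

lemma SimpleGraph.Reachable.eq_of_forall_not_adj {G : SimpleGraph V} {x s : V}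
    (h : G.Reachable x s) (hx : ∀ y, ¬ G.Adj x y) : s = x := by
  obtain ⟨w⟩ := h
  cases w with
  | nil => rfl
  | cons hxy _ => exact absurd hxy (hx _)

/-- Cut the walk from `s` to `x` at its first use of the edge `xy`. -/
lemma SimpleGraph.Reachable.deleteEdges_or {G : SimpleGraph V} {s x : V} (y : V)
    (h : G.Reachable s x) :
    (G.deleteEdges {s(x, y)}).Reachable s x ∨ (G.deleteEdges {s(x, y)}).Reachable s y := by
  obtain ⟨w⟩ := h
  induction w with
  | nil => exact Or.inl .rfl
  | @cons a b x hab _ ih =>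
    by_cases he : s(a, b) = s(x, y)
    · rcases Sym2.eq_iff.mp he with ⟨rfl, -⟩ | ⟨rfl, -⟩
      · exact Or.inl .rfl
      · exact Or.inr .rfl
    · have hab' : (G.deleteEdges {s(x, y)}).Adj a b := deleteEdges_adj.mpr ⟨hab, he⟩
      exact ih.imp hab'.reachable.trans hab'.reachable.trans

lemma SimpleGraph.Reachable.fromEdgeSet_filter {E : Finset (Sym2 V)} {p : Sym2 V → Prop}
    [DecidablePred p] {a s : V} (h : (fromEdgeSet (E : Set (Sym2 V))).Reachable a s)
    (hp : ∀ e ∈ E, (∀ z ∈ e, (fromEdgeSet (E : Set (Sym2 V))).Reachable a z) → p e) :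
    (fromEdgeSet ↑(E.filter p)).Reachable a s := by
  suffices ∀ {u} (w : (fromEdgeSet (E : Set (Sym2 V))).Walk u s),
      (fromEdgeSet (E : Set (Sym2 V))).Reachable a u →
        (fromEdgeSet ↑(E.filter p)).Reachable u s from
    this h.some .rfl
  intro u w
  clear h
  induction w with
  | nil => exact fun _ => .rfl
  | @cons b c _ hbc _ ih =>
    intro hb
    have hc := hb.trans hbc.reachable
    refine (Adj.reachable ?_).trans (ih hc)
    rw [fromEdgeSet_adj] at hbc ⊢
    refine ⟨Finset.mem_filter.mpr ⟨hbc.1, hp _ hbc.1 fun z hz => ?_⟩, hbc.2⟩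
    rcases Sym2.mem_iff.mp hz with rfl | rfl
    exacts [hb, hc]

lemma exists_subset_isAcyclic_reachable_eq (E : Finset (Sym2 V)) :
    ∃ E' ⊆ E, (fromEdgeSet (E' : Set (Sym2 V))).IsAcyclic ∧
      (fromEdgeSet (E' : Set (Sym2 V))).Reachable = (fromEdgeSet (E : Set (Sym2 V))).Reachable := by
  classical
  obtain ⟨F, hle, hF, hreach⟩ :=
    (fromEdgeSet (E : Set (Sym2 V))).exists_isAcyclic_reachable_eq_le
  have hF_eq : fromEdgeSet ↑(E.filter (· ∈ F.edgeSet)) = F := by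
    ext u v
    simp only [fromEdgeSet_adj, Finset.coe_filter, Set.mem_ofPred_eq, mem_edgeSet]
    exact ⟨fun h => h.1.2, fun h => ⟨⟨(hle h).1, h⟩, h.ne⟩⟩
  exact ⟨_, Finset.filter_subset _ _, by rwa [hF_eq], by rw [hF_eq, hreach]⟩

/-- A walk in the complete graph is encoded by its start `x` and the list `[y₁, y₂, …]` of the
points it visits next; these are its edges `x y₁, y₁ y₂, …`. -/
def walkEdges (x : V) : List V → List (Sym2 V)
  | [] => []
  | y :: l => s(x, y) :: walkEdges y l

lemma mem_of_mem_walkEdges {x z : V} {l : List V} {e : Sym2 V} (he : e ∈ walkEdges x l)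
    (hz : z ∈ e) : z ∈ x :: l := by
  induction l generalizing x with
  | nil => simp [walkEdges] at he
  | cons y l ih =>
    rcases List.mem_cons.mp he with rfl | he
    · rcases Sym2.mem_iff.mp hz with rfl | rfl <;> simp
    · exact List.mem_cons_of_mem _ (ih he)

lemma reachable_fromEdgeSet_walkEdges {x z : V} {l : List V} (hz : z ∈ x :: l) :
    (fromEdgeSet {e | e ∈ walkEdges x l}).Reachable x z := by
  induction l generalizing x with
  | nil => rw [List.mem_singleton.mp hz]
  | cons y l ih =>
    have hmono : fromEdgeSet {e | e ∈ walkEdges y l} ≤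
        fromEdgeSet {e | e ∈ walkEdges x (y :: l)} :=
      fromEdgeSet_mono fun e he => List.mem_cons_of_mem _ he
    have hxy : (fromEdgeSet {e | e ∈ walkEdges x (y :: l)}).Reachable x y := by
      by_cases h : x = y
      · rw [h]
      · exact Adj.reachable ((fromEdgeSet_adj _).mpr ⟨List.mem_cons_self, h⟩)
    rcases List.mem_cons.mp hz with rfl | hz
    · rfl
    · exact hxy.trans ((ih hz).mono hmono)

end Graph

section Metric

variable {V : Type*} [PseudoMetricSpace V]

noncomputable def edgeLength : Sym2 V → ℝ := Sym2.lift ⟨dist, dist_comm⟩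

@[simp]
lemma edgeLength_mk (a b : V) : edgeLength s(a, b) = dist a b := rfl

lemma edgeLength_nonneg (e : Sym2 V) : 0 ≤ edgeLength e := by
  induction e using Sym2.ind with
  | _ a b => exact dist_nonneg

noncomputable def walkLength (x : V) : List V → ℝ
  | [] => 0
  | y :: l => dist x y + walkLength y l

@[simp]
lemma walkLength_nil (x : V) : walkLength x [] = 0 := rfl

@[simp]
lemma walkLength_cons (x y : V) (l : List V) :
    walkLength x (y :: l) = dist x y + walkLength y l := rfl

lemma walkLength_eq_sum_walkEdges (x : V) (l : List V) :
    walkLength x l = ((walkEdges x l).map edgeLength).sum := by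
  induction l generalizing x with
  | nil => rfl
  | cons y l ih => simp [walkEdges, ih]

lemma walkLength_append (x : V) (l₁ l₂ : List V) :
    walkLength x (l₁ ++ l₂) = walkLength x l₁ + walkLength (l₁.getLastD x) l₂ := by
  induction l₁ generalizing x with
  | nil => simp
  | cons y l ih =>
    rw [List.cons_append, walkLength_cons, walkLength_cons, ih, List.getLastD_cons, add_assoc]

lemma walkLength_le_dist_add (x z : V) (l : List V) :
    walkLength x l ≤ dist x z + walkLength z l := by
  cases l with
  | nil => simp
  | cons y l =>
    simp only [walkLength_cons]
    linarith [dist_triangle x z y]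

lemma List.Sublist.walkLength_le {l₁ l₂ : List V} (h : l₁.Sublist l₂) (x : V) :
    walkLength x l₁ ≤ walkLength x l₂ := by
  induction h generalizing x with
  | slnil => rfl
  | cons y _ ih => exact (ih x).trans (walkLength_le_dist_add x y _)
  | cons_cons y _ ih => simpa using ih y

lemma walkLength_detour (x y : V) (l₁ l₂ : List V) :
    walkLength x ((y :: l₁ ++ y :: x :: l₂) ++ [x]) =
      2 * dist x y + walkLength y (l₁ ++ [y]) + walkLength x (l₂ ++ [x]) := by
  have : (y :: l₁ ++ y :: x :: l₂) ++ [x] = (y :: (l₁ ++ [y])) ++ (x :: (l₂ ++ [x])) := by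
    simp
  rw [this, walkLength_append, List.getLastD_cons, List.getLastD_concat]
  simp only [walkLength_cons, dist_comm y x]
  ring

/-- Removing an edge `xy` at `x` splits the component of `x` into the part still reachable from
`x` and the part reachable from `y`, whose edge sets are disjoint. Touring both and joining the
tours along `xy` uses `xy` twice and every other edge at most twice. -/
theorem exists_closed_walk_le_two_mul (E : Finset (Sym2 V)) (x : V) :
    ∃ l : List V, (∀ s, (fromEdgeSet (E : Set (Sym2 V))).Reachable x s → s ∈ x :: l) ∧
      walkLength x (l ++ [x]) ≤ 2 * ∑ e ∈ E, edgeLength e := by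
  classical
  induction E using Finset.strongInduction generalizing x with
  | H E ih =>
  by_cases hx : ∀ y, ¬ (fromEdgeSet (E : Set (Sym2 V))).Adj x y
  · refine ⟨[], fun s hs => by simp [hs.eq_of_forall_not_adj hx], ?_⟩
    simpa using Finset.sum_nonneg fun e _ => edgeLength_nonneg e
  obtain ⟨y, hxy⟩ := not_forall_not.mp hx
  rw [fromEdgeSet_adj] at hxy
  set E' := E.erase s(x, y)
  set G' := fromEdgeSet (E' : Set (Sym2 V))
  have hG' : G' = (fromEdgeSet (E : Set (Sym2 V))).deleteEdges {s(x, y)} := by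
    simp [G', E', deleteEdges]
  set p : Sym2 V → Prop := fun e => ∀ z ∈ e, G'.Reachable x z
  have hE' : E' ⊂ E := Finset.erase_ssubset hxy.1
  obtain ⟨lx, hlx, hcostx⟩ := ih (E'.filter p) ((Finset.filter_subset _ _).trans_ssubset hE') x
  obtain ⟨ly, hly, hcosty⟩ :=
    ih (E'.filter (¬ p ·)) ((Finset.filter_subset _ _).trans_ssubset hE') y
  refine ⟨y :: ly ++ y :: x :: lx, fun s hs => ?_, ?_⟩
  · by_cases hxs : G'.Reachable x s
    · have := hlx s (hxs.fromEdgeSet_filter fun e _ he => he)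
      simp only [List.mem_cons, List.mem_append] at this ⊢
      tauto
    · have hys : G'.Reachable y s := by
        rcases hG' ▸ hs.symm.deleteEdges_or y with h | h
        exacts [absurd h.symm hxs, h.symm]
      have := hly s <| hys.fromEdgeSet_filter fun e _ he hp =>
        hxs ((hp _ e.out_fst_mem).trans ((he _ e.out_fst_mem).symm.trans hys))
      simp only [List.mem_cons, List.mem_append] at this ⊢
      tauto
  · rw [walkLength_detour]
    have hsplit := Finset.sum_filter_add_sum_filter_not E' p edgeLength
    have herase := Finset.sum_erase_add E edgeLength hxy.1
    rw [edgeLength_mk] at herase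
    linarith

theorem exists_walk_through_le_two_mul {T : Finset V} {E : Finset (Sym2 V)} {t₀ : V}
    (ht₀ : t₀ ∈ T) (hE : ∀ t ∈ T, (fromEdgeSet (E : Set (Sym2 V))).Reachable t₀ t) :
    ∃ l : List V, (∀ z ∈ t₀ :: l, z ∈ T) ∧ (∀ t ∈ T, t ∈ t₀ :: l) ∧
      walkLength t₀ l ≤ 2 * ∑ e ∈ E, edgeLength e := by
  classical
  obtain ⟨l, hl, hcost⟩ := exists_closed_walk_le_two_mul E t₀
  refine ⟨l.filter (· ∈ T), fun z hz => ?_, fun t ht => ?_, ?_⟩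
  · rcases List.mem_cons.mp hz with rfl | hz
    exacts [ht₀, of_decide_eq_true (List.mem_filter.mp hz).2]
  · rcases List.mem_cons.mp (hl t (hE t ht)) with rfl | htl
    exacts [List.mem_cons_self, List.mem_cons_of_mem _ (List.mem_filter.mpr ⟨htl, by simpa⟩)]
  · calc walkLength t₀ (l.filter (· ∈ T)) ≤ walkLength t₀ (l ++ [t₀]) :=
          (List.filter_sublist.trans (List.sublist_append_left l [t₀])).walkLength_le t₀
      _ ≤ _ := hcost

theorem exists_isAcyclic_connecting_le_walkLength {T : Finset V} {t₀ : V} {l : List V}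
    (hlT : ∀ z ∈ t₀ :: l, z ∈ T) (hTl : ∀ t ∈ T, t ∈ t₀ :: l) :
    ∃ E' : Finset (Sym2 V), (∀ e ∈ E', ∀ x ∈ e, x ∈ T) ∧
      (∀ u ∈ T, ∀ v ∈ T, (fromEdgeSet (E' : Set (Sym2 V))).Reachable u v) ∧
      (fromEdgeSet (E' : Set (Sym2 V))).IsAcyclic ∧
      ∑ e ∈ E', edgeLength e ≤ walkLength t₀ l := by
  classical
  set E₀ := (walkEdges t₀ l).toFinset
  have hreach₀ : ∀ t ∈ T, (fromEdgeSet (E₀ : Set (Sym2 V))).Reachable t₀ t := by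
    intro t ht
    rw [List.coe_toFinset]
    exact reachable_fromEdgeSet_walkEdges (hTl t ht)
  obtain ⟨E', hE'₀, hacyc, hreach⟩ := exists_subset_isAcyclic_reachable_eq E₀
  refine ⟨E', fun e he z hz => hlT z (mem_of_mem_walkEdges (List.mem_toFinset.mp (hE'₀ he)) hz),
    fun u hu v hv => hreach ▸ (hreach₀ u hu).symm.trans (hreach₀ v hv), hacyc, ?_⟩
  calc ∑ e ∈ E', edgeLength e ≤ ∑ e ∈ E₀, edgeLength e :=
        Finset.sum_le_sum_of_subset_of_nonneg hE'₀ fun e _ _ => edgeLength_nonneg e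
    _ ≤ ((walkEdges t₀ l).map edgeLength).sum :=
        List.sum_toFinset_le_sum_map _ fun e _ => edgeLength_nonneg e
    _ = walkLength t₀ l := (walkLength_eq_sum_walkEdges t₀ l).symm

theorem exists_isAcyclic_connecting_le_two_mul (T : Finset V) {E : Finset (Sym2 V)}
    (hE : ∀ u ∈ T, ∀ v ∈ T, (fromEdgeSet (E : Set (Sym2 V))).Reachable u v) :
    ∃ E' : Finset (Sym2 V), (∀ e ∈ E', ∀ x ∈ e, x ∈ T) ∧
      (∀ u ∈ T, ∀ v ∈ T, (fromEdgeSet (E' : Set (Sym2 V))).Reachable u v) ∧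
      (fromEdgeSet (E' : Set (Sym2 V))).IsAcyclic ∧
      ∑ e ∈ E', edgeLength e ≤ 2 * ∑ e ∈ E, edgeLength e := by
  rcases T.eq_empty_or_nonempty with rfl | ⟨t₀, ht₀⟩
  · refine ⟨∅, by simp, by simp, by simp, ?_⟩
    simpa using Finset.sum_nonneg fun e _ => edgeLength_nonneg e
  obtain ⟨l, hlT, hTl, hcost⟩ := exists_walk_through_le_two_mul ht₀ (hE t₀ ht₀)
  obtain ⟨E', hE'T, hconn, hacyc, hE'⟩ := exists_isAcyclic_connecting_le_walkLength hlT hTl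
  exact ⟨E', hE'T, hconn, hacyc, hE'.trans hcost⟩

end Metric

theorem mst_le_two_mul_steiner_general {V : Type*} [MetricSpace V]
    (T : Finset V)
    (Emst : Finset (Sym2 V))
    -- it is a *minimum* spanning tree on `T`:
    (hmst_min : ∀ E' : Finset (Sym2 V), (∀ e ∈ E', ∀ x ∈ e, x ∈ T) →
      (∀ u ∈ T, ∀ v ∈ T, (SimpleGraph.fromEdgeSet (↑E' : Set (Sym2 V))).Reachable u v) →
      (SimpleGraph.fromEdgeSet (↑E' : Set (Sym2 V))).IsAcyclic →
      ∑ e ∈ Emst, Sym2.lift ⟨dist, dist_comm⟩ e ≤ ∑ e ∈ E', Sym2.lift ⟨dist, dist_comm⟩ e)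
    -- `Eopt` is any Steiner tree for `T` (a tree whose vertices may include Steiner points):
    (Eopt : Finset (Sym2 V))
    (hopt_conn : ∀ u ∈ T, ∀ v ∈ T,
      (SimpleGraph.fromEdgeSet (↑Eopt : Set (Sym2 V))).Reachable u v) :
    ∑ e ∈ Emst, Sym2.lift ⟨dist, dist_comm⟩ e
      ≤ 2 * ∑ e ∈ Eopt, Sym2.lift ⟨dist, dist_comm⟩ e := by
  obtain ⟨E', hE'T, hconn, hacyc, hcost⟩ := exists_isAcyclic_connecting_le_two_mul T hopt_conn
  exact (hmst_min E' hE'T hconn hacyc).trans hcost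

/-- Kou–Markowsky–Berman 2-approximation: in a finite metric space, the cost of a minimum
spanning tree of the complete graph on the terminal set `T` (with edge weights given by the
metric) is at most twice the cost of any Steiner tree for `T`, i.e. of any tree in the metric
completion whose vertex set contains `T`. -/
theorem mst_le_two_mul_steiner {V : Type*} [MetricSpace V] [Fintype V]
    (T : Finset V) (hT : T.Nonempty)
    (Emst : Finset (Sym2 V))
    -- `Emst` is a spanning tree of the complete graph on `T`:
    (hmst_sub : ∀ e ∈ Emst, ∀ x ∈ e, x ∈ T)
    (hmst_conn : ∀ u ∈ T, ∀ v ∈ T,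
      (SimpleGraph.fromEdgeSet (↑Emst : Set (Sym2 V))).Reachable u v)
    (hmst_acyc : (SimpleGraph.fromEdgeSet (↑Emst : Set (Sym2 V))).IsAcyclic)
    -- it is a *minimum* spanning tree on `T`:
    (hmst_min : ∀ E' : Finset (Sym2 V), (∀ e ∈ E', ∀ x ∈ e, x ∈ T) →
      (∀ u ∈ T, ∀ v ∈ T, (SimpleGraph.fromEdgeSet (↑E' : Set (Sym2 V))).Reachable u v) →
      (SimpleGraph.fromEdgeSet (↑E' : Set (Sym2 V))).IsAcyclic →
      ∑ e ∈ Emst, Sym2.lift ⟨dist, dist_comm⟩ e ≤ ∑ e ∈ E', Sym2.lift ⟨dist, dist_comm⟩ e)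
    -- `Eopt` is any Steiner tree for `T` (a tree whose vertices may include Steiner points):
    (Eopt : Finset (Sym2 V))
    (hopt_conn : ∀ u ∈ T, ∀ v ∈ T,
      (SimpleGraph.fromEdgeSet (↑Eopt : Set (Sym2 V))).Reachable u v)
    (hopt_acyc : (SimpleGraph.fromEdgeSet (↑Eopt : Set (Sym2 V))).IsAcyclic) :
    ∑ e ∈ Emst, Sym2.lift ⟨dist, dist_comm⟩ e
      ≤ 2 * ∑ e ∈ Eopt, Sym2.lift ⟨dist, dist_comm⟩ e :=
  mst_le_two_mul_steiner_general T Emst hmst_min Eopt hopt_conn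
end

section
/- In the lower-bound instance of the previous context, the minimum spanning tree of the predicted terminal set T̂ = {v₁, v_k, v_{k+1}, …, v_{2k−2}} in the metric completion of the graph consists of the k−1 cycle edges (v₁, v_{2k−2}), (v_{2k−2}, v_{2k−3}), …, (v_{k+1}, v_k), and has total cost k−1. -/
/-- Edge costs in the lower-bound instance on vertices `0, 1, …, 2k-3` (vertex `i` represents
`v_{i+1}`). -/
noncomputable def ecost (k : ℕ) (a b : ℕ) : ℝ :=
  if min a b = 0 ∧ 1 ≤ max a b ∧ max a b ≤ k - 2 then 1 / ((k : ℝ) - 2) ^ 2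
  else if min a b = 0 ∧ max a b = k - 1 then 1 + 1 / ((k : ℝ) - 2) ^ 2
  else 1

theorem ecost_comm (k : ℕ) : ∀ a b : ℕ, ecost k a b = ecost k b a := by
  intro a b
  unfold ecost
  rw [min_comm, max_comm]

noncomputable def ecostS (k : ℕ) : Sym2 ℕ → ℝ := Sym2.lift ⟨ecost k, ecost_comm k⟩

/-- Edges of the lower-bound instance. -/
def edgesLB (k : ℕ) : Finset (Sym2 ℕ) :=
  ((Finset.Icc 1 (k - 1)).image fun i => s(0, i)) ∪
    ((Finset.Icc (k - 1) (2 * k - 4)).image fun j => s(j, j + 1)) ∪ {s(2 * k - 3, 0)}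

/-- Shortest-path distance (in the metric completion) between the endpoints of an unordered
pair, as the infimum of walk costs in the lower-bound graph. -/
noncomputable def spdS (k : ℕ) (e : Sym2 ℕ) : ℝ :=
  sInf {x : ℝ | ∃ u v : ℕ, e = s(u, v) ∧
    ∃ p : (SimpleGraph.fromEdgeSet (↑(edgesLB k) : Set (Sym2 ℕ))).Walk u v,
      x = (p.edges.map (ecostS k)).sum}

/-- The `k-1` cycle edges `(v₁, v_{2k-2}), (v_{2k-2}, v_{2k-3}), …, (v_{k+1}, v_k)`. -/
def cycleLB (k : ℕ) : Finset (Sym2 ℕ) :=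
  insert s(2 * k - 3, 0) ((Finset.Icc (k - 1) (2 * k - 4)).image fun j => s(j, j + 1))

/-- The predicted terminal set `T̂ = {v₁, v_k, v_{k+1}, …, v_{2k-2}}`. -/
def ThatLB (k : ℕ) : Finset ℕ := insert 0 (Finset.Icc (k - 1) (2 * k - 3))

/-!
Every edge of the graph costs at least `1` except the spokes `v₁ v_i` with `i ≤ k - 1`, and these
cheap spokes never leave `{v₁, …, v_{k-1}}`, which contains only one terminal. Hence distinct
terminals are at distance at least `1`. A connected graph on the `k` terminals has at least `k - 1`
proper edges, so it costs at least `k - 1`, while the cycle edges are graph edges of cost `1`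
forming a path through all terminals.
-/

open Finset

namespace SimpleGraph

variable {V : Type*} {G : SimpleGraph V}

theorem Reachable.iff_of_forall_adj {P : V → Prop} (hP : ∀ x y, G.Adj x y → (P x ↔ P y))
    {u v : V} (h : G.Reachable u v) : P u ↔ P v := by
  obtain ⟨p⟩ := h
  induction p with
  | nil => rfl
  | cons hadj _ ih => exact (hP _ _ hadj).trans ih

theorem reachable_of_forall_adj_succ {G : SimpleGraph ℕ} {a b : ℕ}
    (h : ∀ j, a ≤ j → j < b → G.Adj j (j + 1)) {n : ℕ} (han : a ≤ n) (hnb : n ≤ b) :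
    G.Reachable a n := by
  induction n, han using Nat.le_induction with
  | base => rfl
  | succ n han ih => exact (ih (by omega)).trans (h n han (by omega)).reachable

/-- Removing an edge `x y` with `f y = f x + 1` separates `{z | f z ≤ f x}` from its complement. -/
theorem isAcyclic_of_adj_succ (f : V → ℕ) (hf : Function.Injective f)
    (h : ∀ x y, G.Adj x y → f y = f x + 1 ∨ f x = f y + 1) : G.IsAcyclic := by
  rw [isAcyclic_iff_forall_adj_isBridge]
  intro x y hxy
  wlog hsucc : f y = f x + 1 generalizing x y
  · rw [Sym2.eq_swap]
    exact this hxy.symm ((h x y hxy).resolve_left hsucc)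
  rw [isBridge_iff]
  intro hreach
  have hcut : ∀ a b, (G.deleteEdges {s(x, y)}).Adj a b → (f a ≤ f x ↔ f b ≤ f x) := by
    intro a b hab
    rw [deleteEdges_adj, Set.mem_singleton_iff] at hab
    by_contra hne
    rcases h a b hab.1 with hb | ha
    · have hax : a = x := hf (by omega)
      have hby : b = y := hf (by omega)
      exact hab.2 (by rw [hax, hby])
    · have hbx : b = x := hf (by omega)
      have hay : a = y := hf (by omega)
      exact hab.2 (by rw [hbx, hay, Sym2.eq_swap])
  have := hreach.iff_of_forall_adj hcut
  omega

theorem Walk.forall_mem_support_of_subset {s : Set V} (hs : G.support ⊆ s) {u v : V}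
    (p : G.Walk u v) (hu : u ∈ s) : ∀ x ∈ p.support, x ∈ s := by
  induction p with
  | nil => simpa using hu
  | cons hadj _ ih =>
    simp only [support_cons, List.mem_cons, forall_eq_or_imp]
    exact ⟨hu, ih (hs hadj.right_mem_support)⟩

theorem card_le_card_edgeSet_add_one_of_reachable [Finite G.edgeSet] {T : Finset V}
    (hs : G.support ⊆ T) (hT : ∀ u ∈ T, ∀ v ∈ T, G.Reachable u v) :
    #T ≤ Nat.card G.edgeSet + 1 := by
  rcases T.eq_empty_or_nonempty with rfl | ⟨t, ht⟩
  · simp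
  have : Nonempty (T : Set V) := ⟨⟨t, ht⟩⟩
  have hconn : (G.induce (T : Set V)).Connected := by
    refine ⟨fun ⟨u, hu⟩ ⟨v, hv⟩ => ?_⟩
    obtain ⟨p⟩ := hT u hu v hv
    exact ⟨p.induce _ (p.forall_mem_support_of_subset hs hu)⟩
  calc #T = Nat.card (T : Set V) := by simp
    _ ≤ Nat.card (G.induce (T : Set V)).edgeSet + 1 := hconn.card_vert_le_card_edgeSet_add_one
    _ ≤ Nat.card G.edgeSet + 1 := by
      gcongr
      exact Nat.card_le_card_of_injective _ (Embedding.induce _).mapEdgeSet.injective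

theorem card_sub_one_le_sum_of_reachable {F : Finset (Sym2 V)} {T : Finset V}
    (w : Sym2 V → ℝ) (hw₀ : ∀ e ∈ F, 0 ≤ w e) (hw₁ : ∀ e ∈ F, ¬e.IsDiag → 1 ≤ w e)
    (hF : ∀ e ∈ F, ∀ x ∈ e, x ∈ T)
    (hT : ∀ u ∈ T, ∀ v ∈ T, (fromEdgeSet (F : Set (Sym2 V))).Reachable u v) :
    (#T : ℝ) - 1 ≤ ∑ e ∈ F, w e := by
  classical
  set E := F.filter (fun e => ¬e.IsDiag)
  have hE : (fromEdgeSet (F : Set (Sym2 V))).edgeSet = E := by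
    ext e; simp [E]
  have hs : (fromEdgeSet (F : Set (Sym2 V))).support ⊆ T := by
    rintro x ⟨y, hxy⟩
    exact hF _ ((fromEdgeSet_adj _).mp hxy).1 x (Sym2.mem_mk_left x y)
  have : Finite (fromEdgeSet (F : Set (Sym2 V))).edgeSet := by rw [hE]; infer_instance
  have hcard := card_le_card_edgeSet_add_one_of_reachable hs hT
  rw [hE, Nat.card_coe_set_eq, Set.ncard_coe_finset] at hcard
  calc (#T : ℝ) - 1 ≤ #E := by
        have : (#T : ℝ) ≤ #E + 1 := by exact_mod_cast hcard
        linarith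
    _ = ∑ e ∈ E, 1 := by simp
    _ ≤ ∑ e ∈ E, w e := sum_le_sum fun e he => hw₁ e (mem_filter.mp he).1 (mem_filter.mp he).2
    _ ≤ ∑ e ∈ F, w e := sum_le_sum_of_subset_of_nonneg (filter_subset _ _) fun e he _ => hw₀ e he

theorem Walk.eq_or_mem_of_sum_edges_lt_one {w : Sym2 V → ℝ} (hw : ∀ e, 0 ≤ w e) {S : Set V}
    (hS : ∀ x y, G.Adj x y → w s(x, y) < 1 → x ∈ S ∧ y ∈ S) {u v : V} (p : G.Walk u v)
    (hp : (p.edges.map w).sum < 1) : u = v ∨ u ∈ S ∧ v ∈ S := by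
  induction p with
  | nil => exact Or.inl rfl
  | @cons u x v hadj p ih =>
    rw [edges_cons, List.map_cons, List.sum_cons] at hp
    have hrest : 0 ≤ (p.edges.map w).sum := List.sum_nonneg (by simpa using fun e _ => hw e)
    obtain ⟨hu, hx⟩ := hS u x hadj (by linarith [hw s(u, x)])
    rcases ih (by linarith [hw s(u, x)]) with rfl | ⟨-, hv⟩
    · exact Or.inr ⟨hu, hx⟩
    · exact Or.inr ⟨hu, hv⟩

end SimpleGraph

open SimpleGraph

theorem mem_ThatLB {k x : ℕ} : x ∈ ThatLB k ↔ x = 0 ∨ k - 1 ≤ x ∧ x ≤ 2 * k - 3 := by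
  simp [ThatLB]

theorem mem_cycleLB {k : ℕ} {e : Sym2 ℕ} :
    e ∈ cycleLB k ↔ e = s(2 * k - 3, 0) ∨ ∃ j, (k - 1 ≤ j ∧ j ≤ 2 * k - 4) ∧ s(j, j + 1) = e := by
  simp [cycleLB]

theorem mem_ThatLB_of_mem_cycleLB {k : ℕ} (hk : 2 ≤ k) {e : Sym2 ℕ} (he : e ∈ cycleLB k) {x : ℕ}
    (hx : x ∈ e) : x ∈ ThatLB k := by
  rcases mem_cycleLB.mp he with rfl | ⟨j, hj, rfl⟩ <;>
    rcases Sym2.mem_iff.mp hx with rfl | rfl <;> rw [mem_ThatLB] <;> omega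

theorem cycleLB_subset_edgesLB (k : ℕ) : cycleLB k ⊆ edgesLB k := by
  intro e he
  simp only [edgesLB, mem_union, mem_image, mem_singleton]
  rcases mem_cycleLB.mp he with h | h
  · exact Or.inr h
  · exact Or.inl (Or.inr (by simpa using h))

theorem ecostS_nonneg (k : ℕ) (e : Sym2 ℕ) : 0 ≤ ecostS k e := by
  induction e using Sym2.ind with
  | _ a b => simp only [ecostS, Sym2.lift_mk, ecost]; split_ifs <;> positivity

theorem le_of_ecost_lt_one {k a b : ℕ} (h : ecost k a b < 1) : a ≤ k - 2 ∧ b ≤ k - 2 := by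
  unfold ecost at h
  split_ifs at h with h₁ h₂
  · omega
  · have : (0 : ℝ) ≤ 1 / ((k : ℝ) - 2) ^ 2 := by positivity
    linarith
  · exact absurd h (lt_irrefl 1)

theorem ecostS_of_mem_cycleLB {k : ℕ} (hk : 3 ≤ k) {e : Sym2 ℕ} (he : e ∈ cycleLB k) :
    ecostS k e = 1 := by
  rcases mem_cycleLB.mp he with rfl | ⟨j, hj, rfl⟩ <;>
  · simp only [ecostS, Sym2.lift_mk, ecost]
    rw [if_neg (by omega), if_neg (by omega)]

theorem reachable_cycleLB {k : ℕ} (hk : 2 ≤ k) {u v : ℕ} (hu : u ∈ ThatLB k)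
    (hv : v ∈ ThatLB k) :
    (fromEdgeSet (cycleLB k : Set (Sym2 ℕ))).Reachable u v := by
  set G := fromEdgeSet (cycleLB k : Set (Sym2 ℕ))
  have hpath : ∀ n, k - 1 ≤ n → n ≤ 2 * k - 3 → G.Reachable (k - 1) n :=
    fun n => reachable_of_forall_adj_succ fun j hj hjk =>
      (fromEdgeSet_adj _).mpr ⟨mem_cycleLB.mpr (Or.inr ⟨j, ⟨hj, by omega⟩, rfl⟩), by omega⟩
  have hclose : G.Adj 0 (2 * k - 3) :=
    (fromEdgeSet_adj _).mpr ⟨mem_cycleLB.mpr (Or.inl Sym2.eq_swap), by omega⟩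
  have hterm : ∀ t ∈ ThatLB k, G.Reachable (k - 1) t := by
    intro t ht
    rcases mem_ThatLB.mp ht with rfl | ⟨h₁, h₂⟩
    · exact (hpath _ (by omega) le_rfl).trans hclose.symm.reachable
    · exact hpath t h₁ h₂
  exact (hterm u hu).symm.trans (hterm v hv)

/-- Swapping `v₁` to the far end of the path `v_k, …, v_{2k-2}` numbers the cycle edges
consecutively. -/
theorem isAcyclic_cycleLB {k : ℕ} (hk : 2 ≤ k) :
    (fromEdgeSet (cycleLB k : Set (Sym2 ℕ))).IsAcyclic := by
  refine isAcyclic_of_adj_succ (Equiv.swap 0 (2 * k - 2)) (Equiv.injective _) fun x y hxy => ?_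
  obtain ⟨he, hxy⟩ := (fromEdgeSet_adj _).mp hxy
  simp only [Equiv.swap_apply_def]
  rcases mem_cycleLB.mp he with h | ⟨j, hj, h⟩ <;>
  · rcases Sym2.eq_iff.mp h with ⟨rfl, rfl⟩ | ⟨rfl, rfl⟩ <;>
      split_ifs <;> first | contradiction | omega

theorem card_cycleLB {k : ℕ} (hk : 2 ≤ k) : (cycleLB k).card = k - 1 := by
  rw [cycleLB, card_insert_of_notMem, card_image_of_injective, Nat.card_Icc]
  · omega
  · intro a b hab
    rcases Sym2.eq_iff.mp hab with ⟨_, _⟩ | ⟨_, _⟩ <;> omega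
  · simp only [mem_image, mem_Icc, not_exists, not_and]
    intro j hj h
    rcases Sym2.eq_iff.mp h with ⟨_, _⟩ | ⟨_, _⟩ <;> omega

theorem card_ThatLB {k : ℕ} (hk : 2 ≤ k) : (ThatLB k).card = k := by
  rw [ThatLB, card_insert_of_notMem (by rw [mem_Icc]; omega), Nat.card_Icc]
  omega

theorem spdS_le_walk {k u v : ℕ} (p : (fromEdgeSet (edgesLB k : Set (Sym2 ℕ))).Walk u v) :
    spdS k s(u, v) ≤ (p.edges.map (ecostS k)).sum := by
  refine csInf_le ⟨0, ?_⟩ ⟨u, v, rfl, p, rfl⟩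
  rintro x ⟨-, -, -, q, rfl⟩
  exact List.sum_nonneg (by simpa using fun e _ => ecostS_nonneg k e)

theorem spdS_nonneg (k : ℕ) (e : Sym2 ℕ) : 0 ≤ spdS k e := by
  refine Real.sInf_nonneg ?_
  rintro x ⟨-, -, -, q, rfl⟩
  exact List.sum_nonneg (by simpa using fun e _ => ecostS_nonneg k e)

/-- A walk between distinct terminals cannot use cheap spokes only, since these stay inside
`{v₁, …, v_{k-1}}`, which contains no terminal besides `v₁`. -/
theorem one_le_spdS {k u v : ℕ} (hk : 2 ≤ k) (hu : u ∈ ThatLB k) (hv : v ∈ ThatLB k)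
    (huv : u ≠ v) : 1 ≤ spdS k s(u, v) := by
  obtain ⟨p⟩ := (reachable_cycleLB hk hu hv).mono
    (fromEdgeSet_mono (coe_subset.mpr (cycleLB_subset_edgesLB k)))
  refine le_csInf ⟨_, u, v, rfl, p, rfl⟩ ?_
  rintro x ⟨u', v', he, q, rfl⟩
  by_contra! hq
  have hcheap := q.eq_or_mem_of_sum_edges_lt_one (ecostS_nonneg k) (S := {x | x ≤ k - 2})
    (fun x y _ h => le_of_ecost_lt_one h) hq
  rcases Sym2.eq_iff.mp he with ⟨rfl, rfl⟩ | ⟨rfl, rfl⟩ <;>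
  · rw [mem_ThatLB] at hu hv
    simp only [Set.mem_ofPred_eq] at hcheap
    omega

theorem spdS_of_mem_cycleLB {k : ℕ} (hk : 3 ≤ k) {e : Sym2 ℕ} (he : e ∈ cycleLB k) :
    spdS k e = 1 := by
  have hk₂ : 2 ≤ k := by omega
  induction e using Sym2.ind with
  | _ a b =>
  have hab : a ≠ b := by
    rcases mem_cycleLB.mp he with h | ⟨j, -, h⟩ <;>
      rcases Sym2.eq_iff.mp h with ⟨_, _⟩ | ⟨_, _⟩ <;> omega
  have hadj : (fromEdgeSet (edgesLB k : Set (Sym2 ℕ))).Adj a b :=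
    (fromEdgeSet_adj _).mpr ⟨cycleLB_subset_edgesLB k he, hab⟩
  refine le_antisymm ?_ (one_le_spdS hk₂ (mem_ThatLB_of_mem_cycleLB hk₂ he (Sym2.mem_mk_left a b))
    (mem_ThatLB_of_mem_cycleLB hk₂ he (Sym2.mem_mk_right a b)) hab)
  simpa [ecostS_of_mem_cycleLB hk he] using spdS_le_walk hadj.toWalk

theorem sum_spdS_cycleLB {k : ℕ} (hk : 3 ≤ k) : ∑ e ∈ cycleLB k, spdS k e = (k : ℝ) - 1 := by
  rw [sum_congr rfl fun e he => spdS_of_mem_cycleLB hk he, sum_const, card_cycleLB (by omega),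
    nsmul_one, Nat.cast_pred (by omega)]

theorem sub_one_le_sum_spdS {k : ℕ} (hk : 2 ≤ k) {F : Finset (Sym2 ℕ)}
    (hF : ∀ e ∈ F, ∀ x ∈ e, x ∈ ThatLB k)
    (hT : ∀ u ∈ ThatLB k, ∀ v ∈ ThatLB k, (fromEdgeSet (F : Set (Sym2 ℕ))).Reachable u v) :
    (k : ℝ) - 1 ≤ ∑ e ∈ F, spdS k e := by
  have hw₁ : ∀ e ∈ F, ¬e.IsDiag → 1 ≤ spdS k e := by
    intro e he hdiag
    induction e using Sym2.ind with
    | _ a b =>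
      exact one_le_spdS hk (hF _ he a (Sym2.mem_mk_left a b)) (hF _ he b (Sym2.mem_mk_right a b))
        (by simpa using hdiag)
  simpa [card_ThatLB hk] using
    card_sub_one_le_sum_of_reachable (spdS k) (fun e _ => spdS_nonneg k e) hw₁ hF hT

/-- The minimum spanning tree of `T̂` in the metric completion of the lower-bound graph consists
of the `k-1` cycle edges and has total cost `k-1`: the cycle edges form a spanning tree of `T̂`
of cost `k-1` which is of minimum cost among all spanning trees of `T̂`. -/
theorem lower_bound_instance_mst (k : ℕ) (hk : 4 ≤ k) :
    (∀ e ∈ cycleLB k, ∀ x ∈ e, x ∈ ThatLB k) ∧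
    (∀ u ∈ ThatLB k, ∀ v ∈ ThatLB k,
      (SimpleGraph.fromEdgeSet (↑(cycleLB k) : Set (Sym2 ℕ))).Reachable u v) ∧
    (SimpleGraph.fromEdgeSet (↑(cycleLB k) : Set (Sym2 ℕ))).IsAcyclic ∧
    (cycleLB k).card = k - 1 ∧
    ∑ e ∈ cycleLB k, spdS k e = (k : ℝ) - 1 ∧
    ∀ F : Finset (Sym2 ℕ), (∀ e ∈ F, ∀ x ∈ e, x ∈ ThatLB k) →
      (∀ u ∈ ThatLB k, ∀ v ∈ ThatLB k,
        (SimpleGraph.fromEdgeSet (↑F : Set (Sym2 ℕ))).Reachable u v) →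
      (SimpleGraph.fromEdgeSet (↑F : Set (Sym2 ℕ))).IsAcyclic →
      ∑ e ∈ cycleLB k, spdS k e ≤ ∑ e ∈ F, spdS k e := by
  have hk₂ : 2 ≤ k := by omega
  have hk₃ : 3 ≤ k := by omega
  refine ⟨fun e he x hx => mem_ThatLB_of_mem_cycleLB hk₂ he hx,
    fun u hu v hv => reachable_cycleLB hk₂ hu hv, isAcyclic_cycleLB hk₂, card_cycleLB hk₂,
    sum_spdS_cycleLB hk₃, fun F hF hT _ => ?_⟩
  rw [sum_spdS_cycleLB hk₃]
  exact sub_one_le_sum_spdS hk₂ hF hT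
end
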